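/- arXiv:2406.15532 — 3 statements merged into one kernel-verified Lean document; each statement's English description precedes it below -/
import Mathlib

section
/- Let L be a complex Lie algebra with dim_ℂ L ≥ 2 such that every 1/2-derivation of L is a scalar multiple of the identity map. Then every transposed Poisson structure on L is trivial: any commutative associative bilinear multiplication · on L satisfying 2 z·[x,y] = [z·x, y] + [x, z·y] for all x, y, z ∈ L is identically zero. -/
/-- if a complex Lie algebra of dimension at least `2` has only
trivial `1/2`-derivations (scalar multiples of the identity), then every
transposed Poisson structure on it is trivial. -/
theorem transposedPoisson_trivial_of_halfDerivations_trivial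
    (L : Type*) [LieRing L] [LieAlgebra ℂ L]
    (hdim : 2 ≤ Module.rank ℂ L)
    (hhalf : ∀ φ : L →ₗ[ℂ] L,
      (∀ x y : L, φ ⁅x, y⁆ = (1 / 2 : ℂ) • (⁅φ x, y⁆ + ⁅x, φ y⁆)) →
      ∃ c : ℂ, φ = c • (LinearMap.id : L →ₗ[ℂ] L))
    (mul : L →ₗ[ℂ] L →ₗ[ℂ] L)
    (hcomm : ∀ x y : L, mul x y = mul y x)
    (hassoc : ∀ x y z : L, mul (mul x y) z = mul x (mul y z))
    (hcompat : ∀ x y z : L,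
      (2 : ℂ) • mul z ⁅x, y⁆ = ⁅mul z x, y⁆ + ⁅x, mul z y⁆) :
    mul = 0 := by
  -- Every left multiplication operator is a 1/2-derivation, hence scalar.
  have key : ∀ z : L, ∃ c : ℂ, ∀ x : L, mul z x = c • x := by
    intro z
    obtain ⟨c, hc⟩ := hhalf (mul z) (by
      intro x y
      rw [← hcompat x y z, smul_smul]
      norm_num)
    exact ⟨c, fun x => by
      have := congrFun (congrArg DFunLike.coe hc) x
      simpa using this⟩
  -- The scalar is zero since dim ≥ 2.
  have hzero : ∀ z x : L, mul z x = 0 := by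
    intro z x
    obtain ⟨cz, hcz⟩ := key z
    -- find w outside the span of z
    have hne : Submodule.span ℂ ({z} : Set L) ≠ ⊤ := by
      intro htop
      have h1 : Module.rank ℂ L ≤ 1 := by
        have := rank_span_le (R := ℂ) ({z} : Set L)
        rw [htop] at this
        simpa [rank_top] using this
      have := hdim.trans h1
      norm_num at this
    obtain ⟨w, hw⟩ : ∃ w : L, w ∉ Submodule.span ℂ ({z} : Set L) := by
      by_contra h
      push_neg at h
      exact hne (Submodule.eq_top_iff'.2 h)
    obtain ⟨cw, hcw⟩ := key w
    have hcz0 : cz = 0 := by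
      by_contra h
      have : cz • w = cw • z := by rw [← hcz w, ← hcw z, hcomm]
      have hwz : w = (cz⁻¹ * cw) • z := by
        rw [mul_smul, ← this, smul_smul, inv_mul_cancel₀ h, one_smul]
      exact hw (hwz ▸ Submodule.smul_mem _ _ (Submodule.mem_span_singleton_self z))
    rw [hcz, hcz0, zero_smul]
  ext z x
  simp [hzero]
end

section
/- Let G be a nontrivial additive subgroup of ℂ, let λ ∈ ℂ with λ ∉ {0, 1, −2}, and let j ∈ G with j ≠ 0. If φ is a 1/2-derivation of the deformed generalized Heisenberg–Virasoro algebra g(G,λ) of degree j, i.e. φ(g(G,λ)_k) ⊆ g(G,λ)_{k+j} for all k ∈ G, then φ = 0. -/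
open scoped Classical

/-- Index set for the basis of the deformed generalized Heisenberg–Virasoro
algebra `g(G, λ)` (for `λ ∉ {0, 1, -2}`): vectors `L a`, `I a` for `a ∈ G`
together with the central element `C_L`. -/
inductive DGHVIdx (G : AddSubgroup ℂ) : Type
  | L : G → DGHVIdx G
  | I : G → DGHVIdx G
  | CL : DGHVIdx G

/-- Degree of a basis element with respect to the `G`-grading. -/
noncomputable def DGHVIdx.deg {G : AddSubgroup ℂ} : DGHVIdx G → G
  | .L a => a
  | .I a => a
  | .CL => 0

/-!
Since `ad L₀` acts on the piece of degree `k` as multiplication by `k`, the half-derivation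
identity on `(L₀, x)` gives `(k - j) φ(x) = [φ(L₀), x]` for `x` of degree `k`. Hence `φ` is
determined outside degree `j` by `w = φ(L₀)`, which has degree `j ≠ 0`, so `w = a L_j + b I_j`.
The identity on `(L_{2j}, I₀)` forces `λ(λ - 1) a = 0`, and then the one on `(L_{2j}, L_{-2j})`
forces `(λ - 1)(λ + 2) b = 0`; so `w = 0` and `φ` vanishes outside degree `j`. Finally
`L_j` and `I_j` are nonzero multiples of `[L_{-j}, L_{2j}]` and `[L_{-j}, I_{2j}]` (the latter
because `λ ≠ -2`), brackets of elements on which `φ` vanishes.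
-/

def IsHalfDerivation {K L : Type*} [Field K] [LieRing L] [LieAlgebra K L] (φ : L →ₗ[K] L) :
    Prop :=
  ∀ x y : L, φ ⁅x, y⁆ = (1 / 2 : K) • (⁅φ x, y⁆ + ⁅x, φ y⁆)

theorem IsHalfDerivation.two_mul_sub_smul_apply_eq_lie {K L : Type*} [Field K] [NeZero (2 : K)]
    [LieRing L] [LieAlgebra K L] {φ : L →ₗ[K] L} (hφ : IsHalfDerivation φ) {h x : L} {k m : K}
    (hx : ⁅h, x⁆ = k • x) (hφx : ⁅h, φ x⁆ = m • φ x) :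
    (2 * k - m) • φ x = ⁅φ h, x⁆ := by
  have hφhx := hφ h x
  rw [hx, map_smul, hφx] at hφhx
  rw [sub_smul, mul_smul, hφhx, smul_smul, mul_one_div_cancel two_ne_zero, one_smul,
    add_sub_cancel_right]

section

variable {G : AddSubgroup ℂ} {Lg : Type*} [LieRing Lg] [LieAlgebra ℂ Lg]

structure IsDGHVBasis (lam : ℂ) (bas : Module.Basis (DGHVIdx G) ℂ Lg) : Prop where
  lie_L_L : ∀ a b : G, ⁅bas (DGHVIdx.L a), bas (DGHVIdx.L b)⁆ =
      ((b : ℂ) - (a : ℂ)) • bas (DGHVIdx.L (a + b)) +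
        (if a + b = 0 then ((a : ℂ) ^ 3 - (a : ℂ)) / 12 else 0) • bas DGHVIdx.CL
  lie_L_I : ∀ a b : G, ⁅bas (DGHVIdx.L a), bas (DGHVIdx.I b)⁆ =
      ((b : ℂ) - lam * (a : ℂ)) • bas (DGHVIdx.I (a + b))
  lie_I_I : ∀ a b : G, ⁅bas (DGHVIdx.I a), bas (DGHVIdx.I b)⁆ = 0
  lie_CL : ∀ x : Lg, ⁅bas DGHVIdx.CL, x⁆ = 0

abbrev gradedPiece (bas : Module.Basis (DGHVIdx G) ℂ Lg) (k : G) : Submodule ℂ Lg :=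
  Submodule.span ℂ (bas '' {i | i.deg = k})

def IsHomogeneousOfDegree (bas : Module.Basis (DGHVIdx G) ℂ Lg) (φ : Lg →ₗ[ℂ] Lg) (j : G) :
    Prop :=
  ∀ k : G, ∀ x ∈ gradedPiece bas k, φ x ∈ gradedPiece bas (k + j)

variable {lam : ℂ} {bas : Module.Basis (DGHVIdx G) ℂ Lg} {φ : Lg →ₗ[ℂ] Lg} {j : G}

theorem gradedPiece_eq_span_pair {k : G} (hk : k ≠ 0) :
    gradedPiece bas k = Submodule.span ℂ {bas (.L k), bas (.I k)} := by
  have : {i : DGHVIdx G | i.deg = k} = {.L k, .I k} := by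
    ext (m | m | _) <;> simp [DGHVIdx.deg, hk.symm]
  rw [gradedPiece, this, Set.image_pair]

theorem IsHomogeneousOfDegree.exists_apply_L_zero_eq (hdeg : IsHomogeneousOfDegree bas φ j)
    (hj : j ≠ 0) : ∃ a b : ℂ, φ (bas (.L 0)) = a • bas (.L j) + b • bas (.I j) := by
  have h := hdeg 0 (bas (.L 0)) (Submodule.subset_span ⟨.L 0, rfl, rfl⟩)
  rw [zero_add, gradedPiece_eq_span_pair hj, Submodule.mem_span_pair] at h
  obtain ⟨a, b, hab⟩ := h
  exact ⟨a, b, hab.symm⟩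

namespace IsDGHVBasis

theorem lie_CL_right (hB : IsDGHVBasis lam bas) (x : Lg) : ⁅x, bas .CL⁆ = 0 := by
  rw [← lie_skew, hB.lie_CL, neg_zero]

theorem lie_I_L (hB : IsDGHVBasis lam bas) (a b : G) :
    ⁅bas (.I a), bas (.L b)⁆ = (lam * (b : ℂ) - a) • bas (.I (b + a)) := by
  rw [← lie_skew, hB.lie_L_I, ← neg_smul, neg_sub]

theorem lie_L_zero_of_mem_gradedPiece (hB : IsDGHVBasis lam bas) {k : G} {y : Lg}
    (hy : y ∈ gradedPiece bas k) : ⁅bas (.L 0), y⁆ = (k : ℂ) • y := by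
  induction hy using Submodule.span_induction with
  | mem y hy =>
    obtain ⟨i, rfl, rfl⟩ := hy
    rcases i with m | m | _
    · simp [hB.lie_L_L, DGHVIdx.deg]
    · simp [hB.lie_L_I, DGHVIdx.deg]
    · simp [hB.lie_CL_right, DGHVIdx.deg]
  | zero => simp
  | add x y _ _ hx hy => rw [lie_add, hx, hy, smul_add]
  | smul c x _ hx => rw [lie_smul, hx, smul_comm]

theorem deg_sub_smul_apply_eq_lie (hB : IsDGHVBasis lam bas) (hφ : IsHalfDerivation φ)
    (hdeg : IsHomogeneousOfDegree bas φ j) (i : DGHVIdx G) :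
    ((i.deg : ℂ) - j) • φ (bas i) = ⁅φ (bas (.L 0)), bas i⁆ := by
  have hi : bas i ∈ gradedPiece bas i.deg := Submodule.subset_span ⟨i, rfl, rfl⟩
  have h := hφ.two_mul_sub_smul_apply_eq_lie (hB.lie_L_zero_of_mem_gradedPiece hi)
    (hB.lie_L_zero_of_mem_gradedPiece (hdeg _ _ hi))
  rwa [AddSubgroup.coe_add, two_mul, add_sub_add_left_eq_sub] at h

theorem apply_eq_inv_smul_lie (hB : IsDGHVBasis lam bas) (hφ : IsHalfDerivation φ)
    (hdeg : IsHomogeneousOfDegree bas φ j) {i : DGHVIdx G} (hi : (i.deg : ℂ) ≠ j) :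
    φ (bas i) = ((i.deg : ℂ) - j)⁻¹ • ⁅φ (bas (.L 0)), bas i⁆ := by
  rw [eq_inv_smul_iff₀ (sub_ne_zero.mpr hi), hB.deg_sub_smul_apply_eq_lie hφ hdeg]

theorem apply_L_zero_coeff_L_eq_zero (hB : IsDGHVBasis lam bas) (hφ : IsHalfDerivation φ)
    (hdeg : IsHomogeneousOfDegree bas φ j) (hlam0 : lam ≠ 0) (hlam1 : lam ≠ 1) (hj : j ≠ 0)
    {a b : ℂ} (hw : φ (bas (.L 0)) = a • bas (.L j) + b • bas (.I j)) : a = 0 := by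
  have hJ : (j : ℂ) ≠ 0 := by simpa using hj
  have h := hφ (bas (.L (j + j))) (bas (.I 0))
  rw [hB.lie_L_I, map_smul,
    hB.apply_eq_inv_smul_lie hφ hdeg (i := .I (j + j + 0)) (by push_cast [DGHVIdx.deg]; grind),
    hB.apply_eq_inv_smul_lie hφ hdeg (i := .L (j + j)) (by push_cast [DGHVIdx.deg]; grind),
    hB.apply_eq_inv_smul_lie hφ hdeg (i := .I 0) (by push_cast [DGHVIdx.deg]; grind), hw] at h
  simp only [add_lie, smul_lie, lie_smul, hB.lie_L_L, hB.lie_L_I, hB.lie_I_I, hB.lie_I_L,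
    hB.lie_CL, smul_zero, add_zero, DGHVIdx.deg, ← add_assoc, smul_smul, ← add_smul] at h
  have hcoeff := smul_left_injective ℂ (bas.ne_zero _) h
  push_cast at hcoeff
  have key : a * (lam * (lam - 1) * (j : ℂ) ^ 2) = 0 := by
    field_simp at hcoeff
    linear_combination -hcoeff / 6
  simpa [hlam0, sub_eq_zero, hlam1, hJ] using key

theorem apply_L_zero_coeff_I_eq_zero (hB : IsDGHVBasis lam bas) (hφ : IsHalfDerivation φ)
    (hdeg : IsHomogeneousOfDegree bas φ j) (hlam1 : lam ≠ 1) (hlam2 : lam ≠ -2) (hj : j ≠ 0)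
    {b : ℂ} (hw : φ (bas (.L 0)) = b • bas (.I j)) : b = 0 := by
  have hJ : (j : ℂ) ≠ 0 := by simpa using hj
  have h := hφ (bas (.L (j + j))) (bas (.L (-(j + j))))
  rw [hB.lie_L_L, add_neg_cancel, if_pos rfl, map_add, map_smul, map_smul,
    hB.apply_eq_inv_smul_lie hφ hdeg (i := .CL) (by push_cast [DGHVIdx.deg]; grind),
    hB.apply_eq_inv_smul_lie hφ hdeg (i := .L (j + j)) (by push_cast [DGHVIdx.deg]; grind),
    hB.apply_eq_inv_smul_lie hφ hdeg (i := .L (-(j + j))) (by push_cast [DGHVIdx.deg]; grind),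
    hw] at h
  simp only [smul_lie, lie_smul, hB.lie_I_L, hB.lie_L_I, hB.lie_CL_right, smul_zero, add_zero,
    DGHVIdx.deg, neg_add_cancel_left, add_neg_cancel_left, smul_smul, ← add_smul] at h
  have hcoeff := smul_left_injective ℂ (bas.ne_zero _) h
  push_cast at hcoeff
  have key : b * ((lam - 1) * (lam + 2)) = 0 := by
    field_simp at hcoeff
    linear_combination -hcoeff / 16
  simpa [sub_eq_zero, hlam1, add_eq_zero_iff_eq_neg, hlam2] using key

theorem apply_L_zero_eq_zero (hB : IsDGHVBasis lam bas) (hφ : IsHalfDerivation φ)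
    (hdeg : IsHomogeneousOfDegree bas φ j) (hlam0 : lam ≠ 0) (hlam1 : lam ≠ 1)
    (hlam2 : lam ≠ -2) (hj : j ≠ 0) : φ (bas (.L 0)) = 0 := by
  obtain ⟨a, b, hw⟩ := hdeg.exists_apply_L_zero_eq hj
  obtain rfl : a = 0 := hB.apply_L_zero_coeff_L_eq_zero hφ hdeg hlam0 hlam1 hj hw
  rw [zero_smul, zero_add] at hw
  obtain rfl : b = 0 := hB.apply_L_zero_coeff_I_eq_zero hφ hdeg hlam1 hlam2 hj hw
  rwa [zero_smul] at hw

theorem apply_eq_zero_of_deg_ne (hB : IsDGHVBasis lam bas) (hφ : IsHalfDerivation φ)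
    (hdeg : IsHomogeneousOfDegree bas φ j) (hw : φ (bas (.L 0)) = 0) {i : DGHVIdx G}
    (hi : (i.deg : ℂ) ≠ j) : φ (bas i) = 0 := by
  rw [hB.apply_eq_inv_smul_lie hφ hdeg hi, hw, zero_lie, smul_zero]

theorem eq_zero_of_apply_L_zero_eq_zero (hB : IsDGHVBasis lam bas) (hφ : IsHalfDerivation φ)
    (hdeg : IsHomogeneousOfDegree bas φ j) (hlam2 : lam ≠ -2) (hj : j ≠ 0)
    (hw : φ (bas (.L 0)) = 0) : φ = 0 := by
  have hJ : (j : ℂ) ≠ 0 := by simpa using hj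
  have hvanish : ∀ i : DGHVIdx G, (i.deg : ℂ) ≠ j → φ (bas i) = 0 :=
    fun i => hB.apply_eq_zero_of_deg_ne hφ hdeg hw
  have hL : φ (bas (.L j)) = 0 := by
    have h := hφ (bas (.L (-j))) (bas (.L (j + j)))
    rw [hB.lie_L_L, neg_add_cancel_left, if_neg hj, zero_smul, add_zero, map_smul,
      hvanish (.L (-j)) (by push_cast [DGHVIdx.deg]; grind),
      hvanish (.L (j + j)) (by push_cast [DGHVIdx.deg]; grind), zero_lie, lie_zero, add_zero,
      smul_zero, smul_eq_zero] at h
    refine h.resolve_left ?_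
    push_cast
    grind
  have hI : φ (bas (.I j)) = 0 := by
    have h := hφ (bas (.L (-j))) (bas (.I (j + j)))
    rw [hB.lie_L_I, neg_add_cancel_left, map_smul,
      hvanish (.L (-j)) (by push_cast [DGHVIdx.deg]; grind),
      hvanish (.I (j + j)) (by push_cast [DGHVIdx.deg]; grind), zero_lie, lie_zero, add_zero,
      smul_zero, smul_eq_zero] at h
    refine h.resolve_left ?_
    push_cast
    grind
  refine bas.ext fun i => ?_
  by_cases hi : (i.deg : ℂ) = j
  · rcases i with k | k | _
    · obtain rfl : k = j := Subtype.ext hi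
      simpa using hL
    · obtain rfl : k = j := Subtype.ext hi
      simpa using hI
    · exact absurd hi.symm (by simpa [DGHVIdx.deg] using hJ)
  · simpa using hvanish i hi

end IsDGHVBasis

end

theorem halfDerivation_of_nonzero_degree_eq_zero_general
    (G : AddSubgroup ℂ)
    (lam : ℂ) (hlam0 : lam ≠ 0) (hlam1 : lam ≠ 1) (hlam2 : lam ≠ -2)
    (Lg : Type*) [LieRing Lg] [LieAlgebra ℂ Lg]
    (bas : Module.Basis (DGHVIdx G) ℂ Lg)
    (hLL : ∀ a b : G, ⁅bas (DGHVIdx.L a), bas (DGHVIdx.L b)⁆ =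
      ((b : ℂ) - (a : ℂ)) • bas (DGHVIdx.L (a + b)) +
        (if a + b = 0 then ((a : ℂ) ^ 3 - (a : ℂ)) / 12 else 0) • bas DGHVIdx.CL)
    (hLI : ∀ a b : G, ⁅bas (DGHVIdx.L a), bas (DGHVIdx.I b)⁆ =
      ((b : ℂ) - lam * (a : ℂ)) • bas (DGHVIdx.I (a + b)))
    (hII : ∀ a b : G, ⁅bas (DGHVIdx.I a), bas (DGHVIdx.I b)⁆ = 0)
    (hCL : ∀ x : Lg, ⁅bas DGHVIdx.CL, x⁆ = 0)
    (φ : Lg →ₗ[ℂ] Lg)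
    (hφ : ∀ x y : Lg, φ ⁅x, y⁆ = (1 / 2 : ℂ) • (⁅φ x, y⁆ + ⁅x, φ y⁆))
    (j : G) (hj : j ≠ 0)
    (hdeg : ∀ k : G, ∀ x ∈ Submodule.span ℂ (⇑bas '' {i | DGHVIdx.deg i = k}),
      φ x ∈ Submodule.span ℂ (⇑bas '' {i | DGHVIdx.deg i = k + j})) :
    φ = 0 := by
  have hB : IsDGHVBasis lam bas := ⟨hLL, hLI, hII, hCL⟩
  exact hB.eq_zero_of_apply_L_zero_eq_zero hφ hdeg hlam2 hj
    (hB.apply_L_zero_eq_zero hφ hdeg hlam0 hlam1 hlam2 hj)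

/-- a homogeneous `1/2`-derivation of nonzero degree `j` of
`g(G, λ)` (with `λ ∉ {0, 1, -2}`) vanishes. -/
theorem halfDerivation_of_nonzero_degree_eq_zero
    (G : AddSubgroup ℂ) [Nontrivial G]
    (lam : ℂ) (hlam0 : lam ≠ 0) (hlam1 : lam ≠ 1) (hlam2 : lam ≠ -2)
    (Lg : Type*) [LieRing Lg] [LieAlgebra ℂ Lg]
    (bas : Module.Basis (DGHVIdx G) ℂ Lg)
    (hLL : ∀ a b : G, ⁅bas (DGHVIdx.L a), bas (DGHVIdx.L b)⁆ =
      ((b : ℂ) - (a : ℂ)) • bas (DGHVIdx.L (a + b)) +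
        (if a + b = 0 then ((a : ℂ) ^ 3 - (a : ℂ)) / 12 else 0) • bas DGHVIdx.CL)
    (hLI : ∀ a b : G, ⁅bas (DGHVIdx.L a), bas (DGHVIdx.I b)⁆ =
      ((b : ℂ) - lam * (a : ℂ)) • bas (DGHVIdx.I (a + b)))
    (hII : ∀ a b : G, ⁅bas (DGHVIdx.I a), bas (DGHVIdx.I b)⁆ = 0)
    (hCL : ∀ x : Lg, ⁅bas DGHVIdx.CL, x⁆ = 0)
    (φ : Lg →ₗ[ℂ] Lg)
    (hφ : ∀ x y : Lg, φ ⁅x, y⁆ = (1 / 2 : ℂ) • (⁅φ x, y⁆ + ⁅x, φ y⁆))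
    (j : G) (hj : j ≠ 0)
    (hdeg : ∀ k : G, ∀ x ∈ Submodule.span ℂ (⇑bas '' {i | DGHVIdx.deg i = k}),
      φ x ∈ Submodule.span ℂ (⇑bas '' {i | DGHVIdx.deg i = k + j})) :
    φ = 0 :=
  halfDerivation_of_nonzero_degree_eq_zero_general G lam hlam0 hlam1 hlam2 Lg bas hLL hLI hII hCL φ
    hφ j hj hdeg
end

section
/- Let G be an additive subgroup of ℂ which is a free abelian group of rank ν ≥ 1. Then every 1/2-derivation of the deformed generalized Heisenberg–Virasoro algebra g(G,−2) is a scalar multiple of the identity map. -/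
/-!
Subtract from `φ` the multiple of the identity that kills the `L₀`-coefficient of `φ L₀`, and
call the result `ψ`. In coordinates, the 1/2-derivation identity on the pairs `(L_a, L_b)` and
`(L_a, I_b)` becomes a recursion for the `L`- and `I`-coefficients of `ψ L_b` and `ψ I_b`. Its
case `a = 0` kills the coefficient at index `v` unless `v = 2b`, and one further value of `a`
(there is one to spare, `G` being infinite) kills that one too. Hence `ψ` maps every `L_a` and
`I_b` into the centre, so `ψ` annihilates all brackets `[L_a, L_b]` and `[L_a, I_b]`; read at
`a = 0` and at `b = -a` through the structure constants, this makes `ψ` vanish on every basis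
vector.
-/

open scoped Classical

/-- Index set for the basis of the deformed generalized Heisenberg–Virasoro
algebra `g(G, -2)`, where `G` is free abelian of rank `ν` with a fixed
`ℤ`-basis `ε_1, …, ε_ν` (indexed here by `Fin ν`).  The central elements
`C_LI^(i)` for `2 ≤ i ≤ ν` are indexed by the elements of `Fin ν` of positive
value. -/
inductive DGHV2Idx (G : AddSubgroup ℂ) (ν : ℕ) : Type
  | L : G → DGHV2Idx G ν
  | I : G → DGHV2Idx G ν
  | CL : DGHV2Idx G ν
  | CLI : {i : Fin ν // 0 < i.val} → DGHV2Idx G ν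

namespace IsHalfDerivation

variable {K L : Type*} [Field K] [LieRing L] [LieAlgebra K L] {φ : L →ₗ[K] L}

theorem sub_smul_id [NeZero (2 : K)] (hφ : IsHalfDerivation φ) (c : K) :
    IsHalfDerivation (φ - c • LinearMap.id) := by
  intro x y
  simp only [LinearMap.sub_apply, LinearMap.smul_apply, LinearMap.id_apply, hφ x y, sub_lie,
    lie_sub, smul_lie, lie_smul]
  match_scalars <;> field_simp
  ring

theorem lie_eq_zero_of_forall_lie_eq_zero [NeZero (2 : K)] (hφ : IsHalfDerivation φ) {z : L}
    (hz : ∀ y : L, ⁅z, y⁆ = 0) (y : L) : ⁅φ z, y⁆ = 0 := by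
  have h := hφ z y
  rw [hz, hz, map_zero, add_zero, eq_comm, smul_eq_zero] at h
  exact h.resolve_left (by simp [two_ne_zero])

theorem map_lie_eq_zero (hφ : IsHalfDerivation φ) {x y : L} (hx : ∀ w : L, ⁅φ x, w⁆ = 0)
    (hy : ∀ w : L, ⁅φ y, w⁆ = 0) : φ ⁅x, y⁆ = 0 := by
  rw [hφ x y, hx, ← lie_skew, hy, neg_zero, add_zero, smul_zero]

theorem repr_map_lie {ι : Type*} (hφ : IsHalfDerivation φ) (bas : Module.Basis ι K L)
    (x y : L) (M : ι) :
    bas.repr (φ ⁅x, y⁆) M = 1 / 2 * (bas.repr ⁅x, φ y⁆ M - bas.repr ⁅y, φ x⁆ M) := by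
  rw [hφ x y, ← lie_skew y (φ x)]
  simp only [map_smul, map_add, map_neg, Finsupp.smul_apply, Finsupp.add_apply,
    Finsupp.neg_apply, smul_eq_mul]
  ring

end IsHalfDerivation

theorem Module.Basis.repr_lie_eq_mul_repr {ι R L : Type*} [CommRing R] [LieRing L]
    [LieAlgebra R L] (bas : Module.Basis ι R L) {w : L} {M σ : ι} {c : R}
    (h : ∀ J, bas.repr ⁅w, bas J⁆ M = if J = σ then c else 0) (z : L) :
    bas.repr ⁅w, z⁆ M = c * bas.repr z σ := by
  have hext : bas.coord M ∘ₗ (LieAlgebra.ad R L w : L →ₗ[R] L) = c • bas.coord σ :=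
    bas.ext fun J => by simp [h, Finsupp.single_apply]
  simpa using LinearMap.congr_fun hext z

theorem exists_coe_notMem_finset {α S : Type*} [SetLike S α] (s : S) [Infinite s]
    (T : Finset α) : ∃ a : s, (a : α) ∉ T := by
  have hfin : ((↑) ⁻¹' (T : Set α) : Set s).Finite :=
    T.finite_toSet.preimage Subtype.val_injective.injOn
  exact hfin.exists_notMem

section RecursionOnSubgroup

/- `f b v` stands for the coefficient at index `v` of the image of the basis vector of index `b`. -/

variable {G : AddSubgroup ℂ} [Infinite G] {f : G → G → ℂ}

theorem eq_zero_of_recursion_sub (hoff : ∀ b v : G, (2 * (b : ℂ) - v) * f b v = 0)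
    (hrec : ∀ a b v : G,
      f b (v - a) = 0 → f a (v - b) = 0 → ((b : ℂ) - a) * f (a + b) v = 0)
    (b v : G) : f b v = 0 := by
  have off : ∀ b v : G, (v : ℂ) ≠ 2 * b → f b v = 0 := fun b v h =>
    (mul_eq_zero.mp (hoff b v)).resolve_left (sub_ne_zero.mpr h.symm)
  by_cases hv : (v : ℂ) = 2 * b
  · obtain ⟨a, ha⟩ := exists_coe_notMem_finset G {0, (b : ℂ), (b : ℂ) / 2}
    simp only [Finset.mem_insert, Finset.mem_singleton, not_or] at ha
    obtain ⟨ha0, hab, hab2⟩ := ha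
    have h1 : ((v - a : G) : ℂ) ≠ 2 * (b - a : G) := by
      push_cast; intro h; exact ha0 (by linear_combination h - hv)
    have h2 : ((v - (b - a) : G) : ℂ) ≠ 2 * a := by
      push_cast; intro h; exact hab (by linear_combination hv - h)
    have h := hrec a (b - a) v (off _ _ h1) (off _ _ h2)
    rw [add_sub_cancel] at h
    push_cast at h
    exact (mul_eq_zero.mp h).resolve_left fun h' => hab2 (by linear_combination -h' / 2)
  · exact off b v hv

theorem eq_zero_of_recursion_add_two_mul (hoff : ∀ b v : G, (2 * (b : ℂ) - v) * f b v = 0)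
    (hrec : ∀ a b v : G, f b (v - a) = 0 → ((b : ℂ) + 2 * a) * f (a + b) v = 0)
    (b v : G) : f b v = 0 := by
  have off : ∀ b v : G, (v : ℂ) ≠ 2 * b → f b v = 0 := fun b v h =>
    (mul_eq_zero.mp (hoff b v)).resolve_left (sub_ne_zero.mpr h.symm)
  by_cases hv : (v : ℂ) = 2 * b
  · obtain ⟨a, ha⟩ := exists_coe_notMem_finset G {0, -(b : ℂ)}
    simp only [Finset.mem_insert, Finset.mem_singleton, not_or] at ha
    obtain ⟨ha0, hab⟩ := ha
    have h1 : ((v - a : G) : ℂ) ≠ 2 * (b - a : G) := by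
      push_cast; intro h; exact ha0 (by linear_combination h - hv)
    have h := hrec a (b - a) v (off _ _ h1)
    rw [add_sub_cancel] at h
    push_cast at h
    exact (mul_eq_zero.mp h).resolve_left fun h' => hab (by linear_combination h')
  · exact off b v hv

end RecursionOnSubgroup

structure IsDGHV2Basis {G : AddSubgroup ℂ} {ν : ℕ} {Lg : Type*} [LieRing Lg]
    [LieAlgebra ℂ Lg] (ε : Module.Basis (Fin ν) ℤ G)
    (bas : Module.Basis (DGHV2Idx G ν) ℂ Lg) : Prop where
  lie_L_L : ∀ a b : G, ⁅bas (DGHV2Idx.L a), bas (DGHV2Idx.L b)⁆ =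
    ((b : ℂ) - (a : ℂ)) • bas (DGHV2Idx.L (a + b)) +
      (if a + b = 0 then ((a : ℂ) ^ 3 - (a : ℂ)) / 12 else 0) • bas DGHV2Idx.CL
  lie_L_I : ∀ a b : G, ⁅bas (DGHV2Idx.L a), bas (DGHV2Idx.I b)⁆ =
    ((b : ℂ) + 2 * (a : ℂ)) • bas (DGHV2Idx.I (a + b)) +
      (if a + b = 0 then
        ∑ i : {i : Fin ν // 0 < i.val}, ((ε.repr a i.1 : ℤ) : ℂ) • bas (DGHV2Idx.CLI i)
      else 0)
  lie_I_I : ∀ a b : G, ⁅bas (DGHV2Idx.I a), bas (DGHV2Idx.I b)⁆ = 0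
  lie_CL : ∀ x : Lg, ⁅bas DGHV2Idx.CL, x⁆ = 0
  lie_CLI : ∀ (i : {i : Fin ν // 0 < i.val}) (x : Lg), ⁅bas (DGHV2Idx.CLI i), x⁆ = 0

namespace IsDGHV2Basis

open DGHV2Idx

variable {G : AddSubgroup ℂ} {ν : ℕ} {Lg : Type*} [LieRing Lg] [LieAlgebra ℂ Lg]
  {ε : Module.Basis (Fin ν) ℤ G} {bas : Module.Basis (DGHV2Idx G ν) ℂ Lg}
  (hg : IsDGHV2Basis ε bas)
include hg

theorem repr_lie_L_L (b v : G) (z : Lg) :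
    bas.repr ⁅bas (L b), z⁆ (L v) = (v - 2 * b) * bas.repr z (L (v - b)) := by
  refine bas.repr_lie_eq_mul_repr (fun J => ?_) z
  cases J with
  | L a =>
    rw [hg.lie_L_L]
    simp only [L.injEq, eq_sub_iff_add_eq']
    rcases eq_or_ne (b + a) v with rfl | h
    · rw [if_pos rfl]
      split_ifs <;> simp <;> ring
    · split_ifs <;> simp [h]
  | I a =>
    simp only [hg.lie_L_I, reduceCtorEq, if_false]
    split_ifs <;> simp
  | CL => simp [← lie_skew (bas (L b)), hg.lie_CL]
  | CLI i => simp [← lie_skew (bas (L b)), hg.lie_CLI]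

theorem repr_lie_L_I (b v : G) (z : Lg) :
    bas.repr ⁅bas (L b), z⁆ (I v) = (v + b) * bas.repr z (I (v - b)) := by
  refine bas.repr_lie_eq_mul_repr (fun J => ?_) z
  cases J with
  | L a =>
    simp only [hg.lie_L_L, reduceCtorEq, if_false]
    split_ifs <;> simp
  | I a =>
    rw [hg.lie_L_I]
    simp only [I.injEq, eq_sub_iff_add_eq']
    rcases eq_or_ne (b + a) v with rfl | h
    · rw [if_pos rfl]
      split_ifs <;> simp <;> ring
    · split_ifs <;> simp [h]
  | CL => simp [← lie_skew (bas (L b)), hg.lie_CL]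
  | CLI i => simp [← lie_skew (bas (L b)), hg.lie_CLI]

theorem repr_lie_I_L (b v : G) (z : Lg) : bas.repr ⁅bas (I b), z⁆ (L v) = 0 := by
  refine (bas.repr_lie_eq_mul_repr (σ := L v) (c := 0) (fun J => ?_) z).trans (zero_mul _)
  cases J with
  | L a =>
    rw [← lie_skew, hg.lie_L_I]
    split_ifs <;> simp
  | I a => simp [hg.lie_I_I]
  | CL => simp [← lie_skew (bas (I b)), hg.lie_CL]
  | CLI i => simp [← lie_skew (bas (I b)), hg.lie_CLI]

theorem repr_lie_I_I (b v : G) (z : Lg) :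
    bas.repr ⁅bas (I b), z⁆ (I v) = (b - 2 * v) * bas.repr z (L (v - b)) := by
  refine bas.repr_lie_eq_mul_repr (fun J => ?_) z
  cases J with
  | L a =>
    rw [← lie_skew, hg.lie_L_I]
    simp only [L.injEq, eq_sub_iff_add_eq]
    rcases eq_or_ne (a + b) v with rfl | h
    · rw [if_pos rfl]
      split_ifs <;> simp <;> ring
    · split_ifs <;> simp [h]
  | I a => simp [hg.lie_I_I]
  | CL => simp [← lie_skew (bas (I b)), hg.lie_CL]
  | CLI i => simp [← lie_skew (bas (I b)), hg.lie_CLI]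

theorem lie_eq_zero_of_repr_L_of_repr_I {z : Lg} (hL : ∀ v, bas.repr z (L v) = 0)
    (hI : ∀ v, bas.repr z (I v) = 0) (y : Lg) : ⁅z, y⁆ = 0 := by
  rw [← bas.linearCombination_repr z, Finsupp.linearCombination_apply, Finsupp.sum, sum_lie]
  refine Finset.sum_eq_zero fun J _ => ?_
  cases J with
  | L v => simp [hL]
  | I v => simp [hI]
  | CL => simp [smul_lie, hg.lie_CL]
  | CLI i => simp [smul_lie, hg.lie_CLI]

variable [Infinite G]

theorem repr_L_eq_zero_of_lie_eq_zero {z : Lg} (hz : ∀ y : Lg, ⁅z, y⁆ = 0) (v : G) :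
    bas.repr z (L v) = 0 := by
  obtain ⟨b, hb⟩ := exists_coe_notMem_finset G {(v : ℂ)}
  have h := hg.repr_lie_L_L b (v + b) z
  rw [← lie_skew, hz, neg_zero, map_zero, Finsupp.zero_apply, add_sub_cancel_right] at h
  refine (mul_eq_zero.mp h.symm).resolve_left fun h0 => hb ?_
  simp only [Finset.mem_singleton]
  push_cast at h0
  linear_combination -h0

theorem repr_I_eq_zero_of_lie_eq_zero {z : Lg} (hz : ∀ y : Lg, ⁅z, y⁆ = 0) (v : G) :
    bas.repr z (I v) = 0 := by
  obtain ⟨b, hb⟩ := exists_coe_notMem_finset G {-(v : ℂ) / 2}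
  have h := hg.repr_lie_L_I b (v + b) z
  rw [← lie_skew, hz, neg_zero, map_zero, Finsupp.zero_apply, add_sub_cancel_right] at h
  refine (mul_eq_zero.mp h.symm).resolve_left fun h0 => hb ?_
  simp only [Finset.mem_singleton]
  push_cast at h0
  linear_combination h0 / 2

variable {ψ : Lg →ₗ[ℂ] Lg} (hψ : IsHalfDerivation ψ)
include hψ

theorem repr_map_lie_L_L_L (a b v : G) :
    (b - a) * bas.repr (ψ (bas (L (a + b)))) (L v) =
      1 / 2 * ((v - 2 * a) * bas.repr (ψ (bas (L b))) (L (v - a)) -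
        (v - 2 * b) * bas.repr (ψ (bas (L a))) (L (v - b))) := by
  have h := hψ.repr_map_lie bas (bas (L a)) (bas (L b)) (L v)
  rw [hg.lie_L_L, hg.repr_lie_L_L, hg.repr_lie_L_L] at h
  have hC := hg.repr_L_eq_zero_of_lie_eq_zero (hψ.lie_eq_zero_of_forall_lie_eq_zero hg.lie_CL) v
  rw [← h]
  split_ifs <;> simp [hC]

theorem repr_map_lie_L_L_I (a b v : G) :
    (b - a) * bas.repr (ψ (bas (L (a + b)))) (I v) =
      1 / 2 * ((v + a) * bas.repr (ψ (bas (L b))) (I (v - a)) -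
        (v + b) * bas.repr (ψ (bas (L a))) (I (v - b))) := by
  have h := hψ.repr_map_lie bas (bas (L a)) (bas (L b)) (I v)
  rw [hg.lie_L_L, hg.repr_lie_L_I, hg.repr_lie_L_I] at h
  have hC := hg.repr_I_eq_zero_of_lie_eq_zero (hψ.lie_eq_zero_of_forall_lie_eq_zero hg.lie_CL) v
  rw [← h]
  split_ifs <;> simp [hC]

theorem repr_map_lie_L_I_L (a b v : G) :
    (b + 2 * a) * bas.repr (ψ (bas (I (a + b)))) (L v) =
      1 / 2 * ((v - 2 * a) * bas.repr (ψ (bas (I b))) (L (v - a))) := by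
  have h := hψ.repr_map_lie bas (bas (L a)) (bas (I b)) (L v)
  rw [hg.lie_L_I, hg.repr_lie_L_L, hg.repr_lie_I_L, sub_zero] at h
  have hC : ∀ j, bas.repr (ψ (bas (CLI j))) (L v) = 0 := fun j =>
    hg.repr_L_eq_zero_of_lie_eq_zero (hψ.lie_eq_zero_of_forall_lie_eq_zero (hg.lie_CLI j)) v
  rw [← h]
  split_ifs <;> simp [hC]

theorem repr_map_lie_L_I_I (a b v : G) :
    (b + 2 * a) * bas.repr (ψ (bas (I (a + b)))) (I v) =
      1 / 2 * ((v + a) * bas.repr (ψ (bas (I b))) (I (v - a)) -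
        (b - 2 * v) * bas.repr (ψ (bas (L a))) (L (v - b))) := by
  have h := hψ.repr_map_lie bas (bas (L a)) (bas (I b)) (I v)
  rw [hg.lie_L_I, hg.repr_lie_L_I, hg.repr_lie_I_I] at h
  have hC : ∀ j, bas.repr (ψ (bas (CLI j))) (I v) = 0 := fun j =>
    hg.repr_I_eq_zero_of_lie_eq_zero (hψ.lie_eq_zero_of_forall_lie_eq_zero (hg.lie_CLI j)) v
  rw [← h]
  split_ifs <;> simp [hC]

theorem repr_map_I_L_eq_zero (b v : G) : bas.repr (ψ (bas (I b))) (L v) = 0 := by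
  refine eq_zero_of_recursion_add_two_mul (f := fun b v => bas.repr (ψ (bas (I b))) (L v))
    (fun b v => ?_) (fun a b v h => ?_) b v
  · have h := hg.repr_map_lie_L_I_L hψ 0 b v
    rw [zero_add, sub_zero] at h
    push_cast at h
    linear_combination 2 * h
  · rw [hg.repr_map_lie_L_I_L hψ, h, mul_zero, mul_zero]

theorem repr_map_L_zero_I_eq_zero (w : G) : bas.repr (ψ (bas (L 0))) (I w) = 0 := by
  have base : ∀ b v : G, (2 * (b : ℂ) - v) * bas.repr (ψ (bas (L b))) (I v) =
      -(v + b) * bas.repr (ψ (bas (L 0))) (I (v - b)) := fun b v => by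
    have h := hg.repr_map_lie_L_L_I hψ 0 b v
    rw [zero_add, sub_zero] at h
    push_cast at h
    linear_combination 2 * h
  rcases eq_or_ne w 0 with rfl | hw
  -- At `(L_{-e}, L_{2e})` and index `I_e` only diagonal coefficients occur, and `base` expresses
  -- each of them through the one of `ψ L_0` at `I_0`.
  · obtain ⟨e, he⟩ := exists_ne (0 : G)
    have he' : (e : ℂ) ≠ 0 := ZeroMemClass.coe_eq_zero.not.mpr he
    have h := hg.repr_map_lie_L_L_I hψ (-e) (e + e) e
    rw [neg_add_cancel_left, sub_neg_eq_add, sub_add_cancel_left] at h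
    have h1 := base e e
    have h2 := base (-e) (-e)
    simp only [sub_self] at h1 h2
    push_cast at h h1 h2
    have h3 : (e : ℂ) * bas.repr (ψ (bas (L 0))) (I 0) = 0 := by
      linear_combination (-1 / 9) * h + (1 / 3) * h1 - (1 / 6) * h2
    exact (mul_eq_zero.mp h3).resolve_left he'
  · have h := base w (w + w)
    rw [add_sub_cancel_right] at h
    push_cast at h
    have hw' : (w : ℂ) ≠ 0 := ZeroMemClass.coe_eq_zero.not.mpr hw
    have h3 : (w : ℂ) * bas.repr (ψ (bas (L 0))) (I w) = 0 := by linear_combination h / 3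
    exact (mul_eq_zero.mp h3).resolve_left hw'

theorem repr_map_L_I_eq_zero (b v : G) : bas.repr (ψ (bas (L b))) (I v) = 0 := by
  refine eq_zero_of_recursion_sub (f := fun b v => bas.repr (ψ (bas (L b))) (I v))
    (fun b v => ?_) (fun a b v h h' => ?_) b v
  · have h := hg.repr_map_lie_L_L_I hψ 0 b v
    rw [zero_add, sub_zero, hg.repr_map_L_zero_I_eq_zero hψ] at h
    push_cast at h
    linear_combination 2 * h
  · rw [hg.repr_map_lie_L_L_I hψ, h, h', mul_zero, mul_zero, sub_zero, mul_zero]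

variable (h0 : bas.repr (ψ (bas (L 0))) (L 0) = 0)
include h0

theorem repr_map_L_zero_L_eq_zero (w : G) : bas.repr (ψ (bas (L 0))) (L w) = 0 := by
  rcases eq_or_ne w 0 with rfl | hw
  · exact h0
  have h := hg.repr_map_lie_L_I_I hψ 0 w (w + w)
  rw [zero_add, sub_zero, add_sub_cancel_right] at h
  push_cast at h
  have hw' : (w : ℂ) ≠ 0 := ZeroMemClass.coe_eq_zero.not.mpr hw
  have h3 : (w : ℂ) * bas.repr (ψ (bas (L 0))) (L w) = 0 := by linear_combination (-2 / 3) * h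
  exact (mul_eq_zero.mp h3).resolve_left hw'

theorem repr_map_L_L_eq_zero (b v : G) : bas.repr (ψ (bas (L b))) (L v) = 0 := by
  refine eq_zero_of_recursion_sub (f := fun b v => bas.repr (ψ (bas (L b))) (L v))
    (fun b v => ?_) (fun a b v h h' => ?_) b v
  · have h := hg.repr_map_lie_L_L_L hψ 0 b v
    rw [zero_add, sub_zero, hg.repr_map_L_zero_L_eq_zero hψ h0] at h
    push_cast at h
    linear_combination 2 * h
  · rw [hg.repr_map_lie_L_L_L hψ, h, h', mul_zero, mul_zero, sub_zero, mul_zero]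

theorem repr_map_I_I_eq_zero (b v : G) : bas.repr (ψ (bas (I b))) (I v) = 0 := by
  refine eq_zero_of_recursion_add_two_mul (f := fun b v => bas.repr (ψ (bas (I b))) (I v))
    (fun b v => ?_) (fun a b v h => ?_) b v
  · have h := hg.repr_map_lie_L_I_I hψ 0 b v
    rw [zero_add, sub_zero, hg.repr_map_L_L_eq_zero hψ h0] at h
    push_cast at h
    linear_combination 2 * h
  · rw [hg.repr_map_lie_L_I_I hψ, h, hg.repr_map_L_L_eq_zero hψ h0]
    ring

theorem map_lie_L_L_eq_zero (a b : G) : ψ ⁅bas (L a), bas (L b)⁆ = 0 :=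
  hψ.map_lie_eq_zero
    (hg.lie_eq_zero_of_repr_L_of_repr_I (hg.repr_map_L_L_eq_zero hψ h0 a)
      (hg.repr_map_L_I_eq_zero hψ a))
    (hg.lie_eq_zero_of_repr_L_of_repr_I (hg.repr_map_L_L_eq_zero hψ h0 b)
      (hg.repr_map_L_I_eq_zero hψ b))

theorem map_lie_L_I_eq_zero (a b : G) : ψ ⁅bas (L a), bas (I b)⁆ = 0 :=
  hψ.map_lie_eq_zero
    (hg.lie_eq_zero_of_repr_L_of_repr_I (hg.repr_map_L_L_eq_zero hψ h0 a)
      (hg.repr_map_L_I_eq_zero hψ a))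
    (hg.lie_eq_zero_of_repr_L_of_repr_I (hg.repr_map_I_L_eq_zero hψ b)
      (hg.repr_map_I_I_eq_zero hψ h0 b))

theorem map_L_zero_eq_zero_and_map_CL_eq_zero : ψ (bas (L 0)) = 0 ∧ ψ (bas CL) = 0 := by
  obtain ⟨e, he⟩ := exists_ne (0 : G)
  have he' : (e : ℂ) ≠ 0 := ZeroMemClass.coe_eq_zero.not.mpr he
  have h1 := hg.map_lie_L_L_eq_zero hψ h0 e (-e)
  have h2 := hg.map_lie_L_L_eq_zero hψ h0 (e + e) (-(e + e))
  simp only [hg.lie_L_L, add_neg_cancel, if_true, map_add, map_smul] at h1 h2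
  push_cast at h1 h2
  have hC : ((e : ℂ) ^ 3 / 2) • ψ (bas CL) = 0 := by
    linear_combination (norm := module) h2 - (2 : ℂ) • h1
  have hCL := (smul_eq_zero.mp hC).resolve_left (by simp [he'])
  rw [hCL, smul_zero, add_zero] at h1
  have hL0 : (-2 * (e : ℂ)) • ψ (bas (L 0)) = 0 := by linear_combination (norm := module) h1
  exact ⟨(smul_eq_zero.mp hL0).resolve_left (by simp [he']), hCL⟩

theorem map_L_eq_zero (a : G) : ψ (bas (L a)) = 0 := by
  rcases eq_or_ne a 0 with rfl | ha
  · exact (hg.map_L_zero_eq_zero_and_map_CL_eq_zero hψ h0).1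
  have ha' : (a : ℂ) ≠ 0 := ZeroMemClass.coe_eq_zero.not.mpr ha
  have h := hg.map_lie_L_L_eq_zero hψ h0 0 a
  simp only [hg.lie_L_L, zero_add, if_neg ha, map_smul, zero_smul, add_zero] at h
  have h' : (a : ℂ) • ψ (bas (L a)) = 0 := by simpa using h
  exact (smul_eq_zero.mp h').resolve_left ha'

theorem map_I_eq_zero (hν : 1 ≤ ν) (b : G) : ψ (bas (I b)) = 0 := by
  rcases eq_or_ne b 0 with rfl | hb
  · set e := ε ⟨0, hν⟩
    have he' : (e : ℂ) ≠ 0 := ZeroMemClass.coe_eq_zero.not.mpr (ε.ne_zero _)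
    have h := hg.map_lie_L_I_eq_zero hψ h0 e (-e)
    simp only [hg.lie_L_I, add_neg_cancel, if_true, map_add, map_smul, map_sum] at h
    have hsum : ∀ i : {i : Fin ν // 0 < i.val}, (ε.repr e i.1 : ℂ) = 0 := fun i => by
      simp [e, Fin.ext_iff, i.2.ne]
    simp only [hsum, zero_smul, Finset.sum_const_zero, add_zero] at h
    push_cast at h
    have h' : (e : ℂ) • ψ (bas (I 0)) = 0 := by linear_combination (norm := module) h
    exact (smul_eq_zero.mp h').resolve_left he'
  have hb' : (b : ℂ) ≠ 0 := ZeroMemClass.coe_eq_zero.not.mpr hb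
  have h := hg.map_lie_L_I_eq_zero hψ h0 0 b
  simp only [hg.lie_L_I, zero_add, if_neg hb, map_smul, map_zero, add_zero] at h
  have h' : (b : ℂ) • ψ (bas (I b)) = 0 := by simpa using h
  exact (smul_eq_zero.mp h').resolve_left hb'

theorem map_CLI_eq_zero (j : {i : Fin ν // 0 < i.val}) : ψ (bas (CLI j)) = 0 := by
  have h := hg.map_lie_L_I_eq_zero hψ h0 (ε j.1) (-ε j.1)
  simp only [hg.lie_L_I, add_neg_cancel, if_true, map_add, map_smul, map_sum,
    hg.map_I_eq_zero hψ h0 j.1.pos, smul_zero, zero_add] at h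
  simpa [Finsupp.single_apply, Subtype.val_inj] using h

theorem halfDerivation_eq_zero (hν : 1 ≤ ν) : ψ = 0 :=
  bas.ext fun J => by
    cases J with
    | L a => exact hg.map_L_eq_zero hψ h0 a
    | I b => exact hg.map_I_eq_zero hψ h0 hν b
    | CL => exact (hg.map_L_zero_eq_zero_and_map_CL_eq_zero hψ h0).2
    | CLI j => exact hg.map_CLI_eq_zero hψ h0 j

end IsDGHV2Basis

/-- every `1/2`-derivation of `g(G, -2)` (with `G` free abelian
of rank `ν ≥ 1`) is a scalar multiple of the identity. -/
theorem halfDerivation_dgHV_neg_two_is_trivial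
    (ν : ℕ) (hν : 1 ≤ ν)
    (G : AddSubgroup ℂ) (ε : Module.Basis (Fin ν) ℤ G)
    (Lg : Type*) [LieRing Lg] [LieAlgebra ℂ Lg]
    (bas : Module.Basis (DGHV2Idx G ν) ℂ Lg)
    (hLL : ∀ a b : G, ⁅bas (DGHV2Idx.L a), bas (DGHV2Idx.L b)⁆ =
      ((b : ℂ) - (a : ℂ)) • bas (DGHV2Idx.L (a + b)) +
        (if a + b = 0 then ((a : ℂ) ^ 3 - (a : ℂ)) / 12 else 0) •
          bas DGHV2Idx.CL)
    (hLI : ∀ a b : G, ⁅bas (DGHV2Idx.L a), bas (DGHV2Idx.I b)⁆ =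
      ((b : ℂ) + 2 * (a : ℂ)) • bas (DGHV2Idx.I (a + b)) +
        (if a + b = 0 then
          ∑ i : {i : Fin ν // 0 < i.val},
            ((ε.repr a i.1 : ℤ) : ℂ) • bas (DGHV2Idx.CLI i)
        else 0))
    (hII : ∀ a b : G, ⁅bas (DGHV2Idx.I a), bas (DGHV2Idx.I b)⁆ = 0)
    (hCL : ∀ x : Lg, ⁅bas DGHV2Idx.CL, x⁆ = 0)
    (hCLI : ∀ (i : {i : Fin ν // 0 < i.val}) (x : Lg),
      ⁅bas (DGHV2Idx.CLI i), x⁆ = 0)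
    (φ : Lg →ₗ[ℂ] Lg)
    (hφ : ∀ x y : Lg, φ ⁅x, y⁆ = (1 / 2 : ℂ) • (⁅φ x, y⁆ + ⁅x, φ y⁆)) :
    ∃ c : ℂ, φ = c • (LinearMap.id : Lg →ₗ[ℂ] Lg) := by
  have hg : IsDGHV2Basis ε bas := ⟨hLL, hLI, hII, hCL, hCLI⟩
  have : Nonempty (Fin ν) := ⟨⟨0, hν⟩⟩
  have : Infinite G := Infinite.of_injective ε.repr.symm ε.repr.symm.injective
  set c := bas.repr (φ (bas (.L 0))) (.L 0)
  have hψ : IsHalfDerivation (φ - c • LinearMap.id) := IsHalfDerivation.sub_smul_id hφ c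
  exact ⟨c, sub_eq_zero.mp (hg.halfDerivation_eq_zero hψ (by simp [c]) hν)⟩
end
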